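/- In the 0,1 game, every strategy profile in which one agent continues (chooses 2) at every one of her positions and the other agent quits (chooses 1) infinitely often is a subgame perfect equilibrium. -/

import Mathlib

noncomputable section

/-- The two agents. -/
inductive Ag : Type
  | A
  | B
deriving DecidableEq

/-- The set of choices `{1, 2}`. -/
inductive Choice : Type
  | one
  | two
deriving DecidableEq

/-- The polynomial functor whose final coalgebra is the set of finite or
infinite strategy profiles: a node is either an ending position carrying a
utility assignment (no children) or an internal position carrying an agent
and a choice (two children, indexed by `Bool`). -/
def SPF (Agent : Type) : PFunctor.{0} :=
  ⟨(Agent → ℝ) ⊕ (Agent × Choice), fun x => Sum.rec (fun _ => Empty) (fun _ => Bool) x⟩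

/-- Finite or infinite strategy profiles, as the M-type (final coalgebra). -/
def StratProf (Agent : Type) : Type :=
  (SPF Agent).M

/-- The ending position `⟨u⟩`. -/
def leafP {Agent : Type} (u : Agent → ℝ) : StratProf Agent :=
  PFunctor.M.mk ⟨Sum.inl u, fun e => Empty.elim e⟩

/-- The strategy profile `⟨a, c, s₁, s₂⟩`. -/
def nodeP {Agent : Type} (a : Agent) (c : Choice) (s₁ s₂ : StratProf Agent) :
    StratProf Agent :=
  PFunctor.M.mk ⟨Sum.inr (a, c), fun b => bif b then s₂ else s₁⟩

/-- The child selected by choice `c`. -/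
def cchild {Agent : Type} (c : Choice) (s₁ s₂ : StratProf Agent) : StratProf Agent :=
  match c with
  | .one => s₁
  | .two => s₂

/-- `conv s`: following the choices of `s` reaches an ending position after
finitely many steps (inductive definition). -/
inductive Conv {Agent : Type} : StratProf Agent → Prop
  | leaf (u : Agent → ℝ) : Conv (leafP u)
  | node1 (a : Agent) (s₁ s₂ : StratProf Agent) :
      Conv s₁ → Conv (nodeP a Choice.one s₁ s₂)
  | node2 (a : Agent) (s₁ s₂ : StratProf Agent) :
      Conv s₂ → Conv (nodeP a Choice.two s₁ s₂)

/-- The graph of the (partial) utility assignment `ŝ`: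
`UtilR s u` holds iff following the choices of `s` reaches the ending
position `⟨u⟩`. -/
inductive UtilR {Agent : Type} : StratProf Agent → (Agent → ℝ) → Prop
  | leaf (u : Agent → ℝ) : UtilR (leafP u) u
  | node1 (a : Agent) (s₁ s₂ : StratProf Agent) (u : Agent → ℝ) :
      UtilR s₁ u → UtilR (nodeP a Choice.one s₁ s₂) u
  | node2 (a : Agent) (s₁ s₂ : StratProf Agent) (u : Agent → ℝ) :
      UtilR s₂ u → UtilR (nodeP a Choice.two s₁ s₂) u

open Classical in
/-- The utility assignment `ŝ` (an arbitrary default on non-convergent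
profiles). -/
def util {Agent : Type} (s : StratProf Agent) : Agent → ℝ :=
  if h : ∃ u, UtilR s u then h.choose else fun _ => 0

/-- `□P`, the coinductive `always` modality: `P` holds at every position of
the strategy profile (greatest fixed point). -/
def Always {Agent : Type} (P : StratProf Agent → Prop) (s : StratProf Agent) : Prop :=
  ∃ R : StratProf Agent → Prop, R s ∧ ∀ t, R t →
    P t ∧ ∀ a c s₁ s₂, t = nodeP a c s₁ s₂ → R s₁ ∧ R s₂

/-- `PE s`: `s` is always-convergent and the choice at the root of `s` is at
least as good, for the agent who owns the root, as the other choice. -/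
def PE {Agent : Type} (s : StratProf Agent) : Prop :=
  Always Conv s ∧
    (∀ a s₁ s₂, s = nodeP a Choice.one s₁ s₂ → util s₁ a ≥ util s₂ a) ∧
    (∀ a s₁ s₂, s = nodeP a Choice.two s₁ s₂ → util s₂ a ≥ util s₁ a)

/-- Subgame perfect equilibrium: `□PE`. -/
def SPE {Agent : Type} : StratProf Agent → Prop :=
  Always PE

/-- `s =_g s'`: the two strategy profiles have the same underlying game
(coinductive definition). -/
def SameGame {Agent : Type} (s s' : StratProf Agent) : Prop :=
  ∃ R : StratProf Agent → StratProf Agent → Prop, R s s' ∧ ∀ t t', R t t' →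
    (∃ u, t = leafP u ∧ t' = leafP u) ∨
    (∃ a c c' s₁ s₂ s₁' s₂',
      t = nodeP a c s₁ s₂ ∧ t' = nodeP a c' s₁' s₂' ∧ R s₁ s₁' ∧ R s₂ s₂')

/-- `Rat_∞`: rationality for finite or infinite strategy profiles
(coinductive definition). -/
def RatInf {Agent : Type} (s : StratProf Agent) : Prop :=
  ∃ R : StratProf Agent → Prop, R s ∧ ∀ t, R t →
    (∃ u, t = leafP u) ∨
    (∃ a c s₁ s₂ s₁' s₂', t = nodeP a c s₁ s₂ ∧
      SameGame (nodeP a c s₁' s₂') (nodeP a c s₁ s₂) ∧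
      SPE (nodeP a c s₁' s₂') ∧ R (cchild c s₁ s₂))

/-- `diverg`: following the choices never reaches an ending position
(coinductive definition). -/
def Diverg {Agent : Type} (s : StratProf Agent) : Prop :=
  ∃ R : StratProf Agent → Prop, R s ∧ ∀ t, R t →
    ∃ a c s₁ s₂, t = nodeP a c s₁ s₂ ∧ R (cchild c s₁ s₂)

/-- The agent moving at position `n` of an infinite comb game: Alice at even
positions, Bob at odd positions. -/
def agAt (n : ℕ) : Ag :=
  if n % 2 = 0 then Ag.A else Ag.B

/-- Leaf utilities of the 0,1 game at position `n`: the agent who quits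
receives `0` and the other agent receives `1`. -/
def u01 (n : ℕ) : Ag → ℝ :=
  if n % 2 = 0 then fun x =>
    match x with
    | Ag.A => (0 : ℝ)
    | Ag.B => (1 : ℝ)
  else fun x =>
    match x with
    | Ag.A => (1 : ℝ)
    | Ag.B => (0 : ℝ)

/-- One corecursion step for the strategy profile of the 0,1 game determined
by the choice function `f : ℕ → Choice` (the choice made at each position). -/
def comb01Step (f : ℕ → Choice) : (ℕ ⊕ (Ag → ℝ)) → (SPF Ag).Obj (ℕ ⊕ (Ag → ℝ))
  | Sum.inr u => ⟨Sum.inl u, fun e => Empty.elim e⟩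
  | Sum.inl n =>
      ⟨Sum.inr (agAt n, f n),
        fun b => bif b then Sum.inl (n + 1) else Sum.inr (u01 n)⟩

/-- The strategy profile of the 0,1 game, starting at position `n`, in which
the choice at each position `m` is `f m`. -/
def comb01 (f : ℕ → Choice) (n : ℕ) : StratProf Ag :=
  PFunctor.M.corec (comb01Step f) (Sum.inl n)

/-!
If only one agent `q` ever quits, and she quits infinitely often, then every subgame ends at the
next quitting position, and all those leaves carry the same utilities: `0` for `q` and `1` for the
other agent. At a position of `q` both choices give her `0`; the other agent always continues,
getting `1` rather than the `0` of quitting. So at every position the owner's choice is optimal.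
-/

section Profiles

variable {Agent : Type}

theorem leafP_ne_nodeP {u : Agent → ℝ} {a : Agent} {c : Choice} {s₁ s₂ : StratProf Agent} :
    leafP u ≠ nodeP a c s₁ s₂ := fun h => by
  simpa using congrArg Sigma.fst (PFunctor.M.mk_inj h)

theorem leafP_injective : Function.Injective (leafP : (Agent → ℝ) → StratProf Agent) :=
  fun _ _ h => Sum.inl.inj (congrArg Sigma.fst (PFunctor.M.mk_inj h))

theorem nodeP_inj {a a' : Agent} {c c' : Choice} {s₁ s₂ s₁' s₂' : StratProf Agent} :
    nodeP a c s₁ s₂ = nodeP a' c' s₁' s₂' ↔ a = a' ∧ c = c' ∧ s₁ = s₁' ∧ s₂ = s₂' := by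
  refine ⟨fun h => ?_, by rintro ⟨rfl, rfl, rfl, rfl⟩; rfl⟩
  have h := PFunctor.M.mk_inj h
  obtain ⟨rfl, rfl⟩ := Prod.mk.inj (Sum.inr.inj (congrArg Sigma.fst h))
  have hchildren := eq_of_heq (Sigma.mk.inj h).2
  exact ⟨rfl, rfl, congrFun hchildren false, congrFun hchildren true⟩

theorem UtilR.eq_of_leafP {u w : Agent → ℝ} (h : UtilR (leafP u) w) : w = u := by
  generalize hs : leafP u = s at h
  cases h with
  | leaf => exact leafP_injective hs.symm
  | node1 | node2 => exact absurd hs leafP_ne_nodeP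

theorem UtilR.of_nodeP {a : Agent} {c : Choice} {s₁ s₂ : StratProf Agent} {w : Agent → ℝ}
    (h : UtilR (nodeP a c s₁ s₂) w) : UtilR (cchild c s₁ s₂) w := by
  generalize hs : nodeP a c s₁ s₂ = s at h
  cases h with
  | leaf => exact absurd hs.symm leafP_ne_nodeP
  | node1 _ _ _ _ ht | node2 _ _ _ _ ht =>
    obtain ⟨-, rfl, rfl, rfl⟩ := nodeP_inj.1 hs
    exact ht

theorem UtilR.unique {s : StratProf Agent} {u w : Agent → ℝ} (hu : UtilR s u)
    (hw : UtilR s w) : u = w := by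
  induction hu with
  | leaf => exact hw.eq_of_leafP.symm
  | node1 _ _ _ _ _ ih | node2 _ _ _ _ _ ih => exact ih hw.of_nodeP

theorem UtilR.util_eq {s : StratProf Agent} {u : Agent → ℝ} (h : UtilR s u) : util s = u := by
  have hex : ∃ u, UtilR s u := ⟨u, h⟩
  rw [util, dif_pos hex]
  exact hex.choose_spec.unique h

theorem UtilR.conv {s : StratProf Agent} {u : Agent → ℝ} (h : UtilR s u) : Conv s := by
  induction h with
  | leaf u => exact .leaf u
  | node1 a s₁ s₂ _ _ ih => exact .node1 a s₁ s₂ ih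
  | node2 a s₁ s₂ _ _ ih => exact .node2 a s₁ s₂ ih

theorem util_leafP (u : Agent → ℝ) : util (leafP u) = u :=
  (UtilR.leaf u).util_eq

theorem always_leafP {P : StratProf Agent → Prop} {u : Agent → ℝ} (h : P (leafP u)) :
    Always P (leafP u) :=
  ⟨(· = leafP u), rfl, by
    rintro t rfl
    exact ⟨h, fun a c s₁ s₂ hn => absurd hn leafP_ne_nodeP⟩⟩

theorem pe_leafP (u : Agent → ℝ) : PE (leafP u) :=
  ⟨always_leafP (.leaf u), fun _ _ _ h => absurd h leafP_ne_nodeP,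
    fun _ _ _ h => absurd h leafP_ne_nodeP⟩

end Profiles

theorem agAt_eq_agAt_iff {m n : ℕ} : agAt m = agAt n ↔ m % 2 = n % 2 := by
  unfold agAt
  split_ifs <;> simp <;> omega

theorem u01_apply (n : ℕ) (x : Ag) : u01 n x = if x = agAt n then 0 else 1 := by
  unfold u01 agAt
  split_ifs <;> cases x <;> simp_all

theorem u01_eq_u01_of_agAt_eq {m n : ℕ} (h : agAt m = agAt n) : u01 m = u01 n := by
  funext x
  simp only [u01_apply, h]

theorem u01_agAt (n : ℕ) : u01 n (agAt n) = 0 := by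
  simp [u01_apply]

theorem u01_nonneg (n : ℕ) (x : Ag) : 0 ≤ u01 n x := by
  rw [u01_apply]
  split_ifs <;> norm_num

theorem comb01_eq (f : ℕ → Choice) (n : ℕ) :
    comb01 f n = nodeP (agAt n) (f n) (leafP (u01 n)) (comb01 f (n + 1)) := by
  rw [comb01, ← PFunctor.M.mk_dest (PFunctor.M.corec _ _), PFunctor.M.dest_corec, nodeP]
  refine congrArg PFunctor.M.mk (congrArg (Sigma.mk _) (funext fun b => ?_))
  cases b with
  | true => rfl
  | false =>
    show PFunctor.M.corec (comb01Step f) (Sum.inr (u01 n)) = leafP (u01 n)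
    rw [← PFunctor.M.mk_dest (PFunctor.M.corec _ _), PFunctor.M.dest_corec, leafP]
    exact congrArg PFunctor.M.mk (congrArg (Sigma.mk _) (funext nofun))

section Comb

variable {f : ℕ → Choice}

theorem always_comb01 {P : StratProf Ag → Prop} (hleaf : ∀ u, P (leafP u))
    (hcomb : ∀ n, P (comb01 f n)) (n : ℕ) : Always P (comb01 f n) := by
  refine ⟨fun t => (∃ m, t = comb01 f m) ∨ ∃ u, t = leafP u, .inl ⟨n, rfl⟩, ?_⟩
  rintro t (⟨m, rfl⟩ | ⟨u, rfl⟩)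
  · refine ⟨hcomb m, fun a c s₁ s₂ hm => ?_⟩
    obtain ⟨-, -, rfl, rfl⟩ := nodeP_inj.1 ((comb01_eq f m).symm.trans hm)
    exact ⟨.inr ⟨_, rfl⟩, .inl ⟨_, rfl⟩⟩
  · exact ⟨hleaf u, fun a c s₁ s₂ hn => absurd hn leafP_ne_nodeP⟩

theorem utilR_comb01 {v : Ag → ℝ} (hv : ∀ m, f m = .one → u01 m = v) {n m : ℕ}
    (hnm : n ≤ m) (hm : f m = .one) : UtilR (comb01 f n) v := by
  obtain ⟨k, rfl⟩ := Nat.exists_eq_add_of_le hnm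
  induction k generalizing n with
  | zero =>
    rw [Nat.add_zero] at hm
    rw [comb01_eq, hm, ← hv n hm]
    exact .node1 _ _ _ _ (.leaf _)
  | succ k ih =>
    rw [comb01_eq]
    cases hn : f n with
    | one => exact hv n hn ▸ .node1 _ _ _ _ (.leaf _)
    | two => exact .node2 _ _ _ _ (ih (by omega) (by rwa [Nat.add_right_comm]))

theorem spe_comb01 (q : Ag) (hq : ∀ n, f n = .one → agAt n = q)
    (hinf : ∃ᶠ n in Filter.atTop, f n = .one) (n : ℕ) : SPE (comb01 f n) := by
  obtain ⟨n₀, -, hn₀⟩ := Filter.frequently_atTop.1 hinf 0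
  have hv : ∀ m, f m = .one → u01 m = u01 n₀ := fun m hm =>
    u01_eq_u01_of_agAt_eq ((hq m hm).trans (hq n₀ hn₀).symm)
  have hutilR : ∀ m, UtilR (comb01 f m) (u01 n₀) := fun m => by
    obtain ⟨m', hmm', hm'⟩ := Filter.frequently_atTop.1 hinf m
    exact utilR_comb01 hv hmm' hm'
  have hpe : ∀ m, PE (comb01 f m) := by
    intro m
    have hquit : util (leafP (u01 m)) (agAt m) = 0 := by rw [util_leafP, u01_agAt]
    have hcont : util (comb01 f (m + 1)) = u01 n₀ := (hutilR _).util_eq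
    refine ⟨always_comb01 .leaf (fun k => (hutilR k).conv) m,
      fun a s₁ s₂ hm => ?_, fun a s₁ s₂ hm => ?_⟩ <;>
    obtain ⟨rfl, hc, rfl, rfl⟩ := nodeP_inj.1 ((comb01_eq f m).symm.trans hm) <;>
    rw [hquit, hcont]
    · rw [← hv m hc, u01_agAt]
    · exact u01_nonneg _ _
  exact always_comb01 pe_leafP hpe n

end Comb

/-- In the 0,1 game, every strategy profile in which one agent continues
(chooses 2) at every one of her positions while the other agent quits
(chooses 1) infinitely often is a subgame perfect equilibrium.  A strategy
profile of the 0,1 game is given by its choice function `f : ℕ → Choice`;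
Alice moves at even positions `2k` and Bob at odd positions `2k+1`. -/
theorem zeroOne_spe (f : ℕ → Choice)
    (h : ((∀ k : ℕ, f (2 * k) = Choice.two) ∧
            ∀ m : ℕ, ∃ k : ℕ, m ≤ k ∧ f (2 * k + 1) = Choice.one) ∨
         ((∀ k : ℕ, f (2 * k + 1) = Choice.two) ∧
            ∀ m : ℕ, ∃ k : ℕ, m ≤ k ∧ f (2 * k) = Choice.one)) :
    SPE (comb01 f 0) := by
  rcases h with ⟨hcont, hquit⟩ | ⟨hcont, hquit⟩
  · refine spe_comb01 (agAt 1) (fun n hn => agAt_eq_agAt_iff.2 ?_)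
      (Filter.frequently_atTop.2 fun m => ?_) 0
    · by_contra hodd
      have : f (2 * (n / 2)) = .one := by rwa [show 2 * (n / 2) = n by omega]
      simp [hcont] at this
    · obtain ⟨k, hk, hfk⟩ := hquit m
      exact ⟨2 * k + 1, by omega, hfk⟩
  · refine spe_comb01 (agAt 0) (fun n hn => agAt_eq_agAt_iff.2 ?_)
      (Filter.frequently_atTop.2 fun m => ?_) 0
    · by_contra heven
      have : f (2 * (n / 2) + 1) = .one := by rwa [show 2 * (n / 2) + 1 = n by omega]
      simp [hcont] at this
    · obtain ⟨k, hk, hfk⟩ := hquit m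
      exact ⟨2 * k, by omega, hfk⟩
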